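/- arXiv:1411.7359 — 7 statements merged into one kernel-verified Lean document; each statement's English description precedes it below -/
import Mathlib

section
/- With c, H, V as in the LCS difference-table setting, let [x_i = y_j] denote 1 if x_i = y_j and 0 otherwise (where H(0,j) = 0 and V(i,0) = 0 are the boundary values). Then for all i,j ≥ 1: V(i,j) = max{[x_i = y_j] - H(i-1,j), 0, V(i,j-1) - H(i-1,j)} and H(i,j) = max{[x_i = y_j] - V(i,j-1), 0, H(i-1,j) - V(i,j-1)}. -/
/-!
Write `p, q, r, s` for the LCS lengths of `(A, B)`, `(A ++ [a], B)`, `(A, B ++ [b])` and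
`(A ++ [a], B ++ [b])`. Appending one letter to one side raises the LCS length by at most one,
so `q - p` and `r - p` lie in `{0, 1}`, and `s = p + 1` if `a = b`, `s = max q r` otherwise.
Both recurrences are then a case check on these four numbers.
-/

namespace List

variable {α : Type*}

theorem sublist_concat_iff {Z A : List α} {a : α} :
    Z <+ A ++ [a] ↔ Z <+ A ∨ ∃ Z', Z = Z' ++ [a] ∧ Z' <+ A := by
  constructor
  · intro h
    obtain ⟨Z', T, rfl, hZ', hT⟩ := sublist_append_iff.mp h
    rcases sublist_singleton.mp hT with rfl | rfl
    · exact .inl (by simpa using hZ')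
    · exact .inr ⟨Z', rfl, hZ'⟩
  · rintro (h | ⟨Z', rfl, hZ'⟩)
    · exact h.trans (sublist_append_left A [a])
    · exact hZ'.append (Sublist.refl [a])

theorem Sublist.dropLast_of_concat {Z A : List α} {a : α} (h : Z <+ A ++ [a]) :
    Z.dropLast <+ A := by
  rcases sublist_concat_iff.mp h with h | ⟨Z', rfl, hZ'⟩
  · exact (dropLast_sublist Z).trans h
  · simpa using hZ'

theorem take_eq_take_pred_append_getElem {X : List α} {i : ℕ} (hi : 1 ≤ i)
    (hiX : i ≤ X.length) : X.take i = X.take (i - 1) ++ [X[i - 1]] := by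
  obtain ⟨i, rfl⟩ : ∃ k, i = k + 1 := ⟨i - 1, by omega⟩
  exact take_succ_eq_append_getElem (by omega)

end List

section LCS

open List

variable {α : Type*}

def commonSublistLengths (A B : List α) : Set ℕ :=
  {l | ∃ Z : List α, Z.length = l ∧ Z.Sublist A ∧ Z.Sublist B}

theorem bddAbove_commonSublistLengths (A B : List α) :
    BddAbove (commonSublistLengths A B) :=
  ⟨A.length, fun _ ⟨_, hZl, hZA, _⟩ => hZl ▸ hZA.length_le⟩

noncomputable def lcsLength (A B : List α) : ℕ :=
  sSup (commonSublistLengths A B)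

theorem isGreatest_lcsLength (A B : List α) :
    IsGreatest (commonSublistLengths A B) (lcsLength A B) :=
  ⟨Nat.sSup_mem ⟨0, [], rfl, nil_sublist A, nil_sublist B⟩ (bddAbove_commonSublistLengths A B),
    fun _ => le_csSup (bddAbove_commonSublistLengths A B)⟩

theorem exists_sublist_length_eq_lcsLength (A B : List α) :
    ∃ Z : List α, Z.length = lcsLength A B ∧ Z <+ A ∧ Z <+ B :=
  (isGreatest_lcsLength A B).1

theorem List.Sublist.length_le_lcsLength {Z A B : List α} (hA : Z <+ A) (hB : Z <+ B) :
    Z.length ≤ lcsLength A B :=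
  (isGreatest_lcsLength A B).2 ⟨Z, rfl, hA, hB⟩

theorem lcsLength_comm (A B : List α) : lcsLength A B = lcsLength B A := by
  obtain ⟨Z, hZ, hZA, hZB⟩ := exists_sublist_length_eq_lcsLength A B
  obtain ⟨W, hW, hWB, hWA⟩ := exists_sublist_length_eq_lcsLength B A
  have := hZB.length_le_lcsLength hZA
  have := hWA.length_le_lcsLength hWB
  omega

theorem lcsLength_mono {A A' B B' : List α} (hA : A <+ A') (hB : B <+ B') :
    lcsLength A B ≤ lcsLength A' B' := by
  obtain ⟨Z, hZ, hZA, hZB⟩ := exists_sublist_length_eq_lcsLength A B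
  exact hZ ▸ (hZA.trans hA).length_le_lcsLength (hZB.trans hB)

theorem lcsLength_concat_left_le (A B : List α) (a : α) :
    lcsLength (A ++ [a]) B ≤ lcsLength A B + 1 := by
  obtain ⟨Z, hZ, hZA, hZB⟩ := exists_sublist_length_eq_lcsLength (A ++ [a]) B
  have := hZA.dropLast_of_concat.length_le_lcsLength ((Z.dropLast_sublist).trans hZB)
  rw [length_dropLast] at this
  omega

theorem lcsLength_concat_right_le (A B : List α) (b : α) :
    lcsLength A (B ++ [b]) ≤ lcsLength A B + 1 := by
  rw [lcsLength_comm, lcsLength_comm A]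
  exact lcsLength_concat_left_le B A b

theorem lcsLength_concat_concat_self (A B : List α) (a : α) :
    lcsLength (A ++ [a]) (B ++ [a]) = lcsLength A B + 1 := by
  obtain ⟨Z, hZ, hZA, hZB⟩ := exists_sublist_length_eq_lcsLength (A ++ [a]) (B ++ [a])
  obtain ⟨W, hW, hWA, hWB⟩ := exists_sublist_length_eq_lcsLength A B
  have hle := hZA.dropLast_of_concat.length_le_lcsLength hZB.dropLast_of_concat
  have hge := (hWA.append (Sublist.refl [a])).length_le_lcsLength (hWB.append (Sublist.refl [a]))
  rw [length_dropLast] at hle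
  rw [length_append, length_singleton] at hge
  omega

theorem lcsLength_concat_concat_of_ne (A B : List α) {a b : α} (hab : a ≠ b) :
    lcsLength (A ++ [a]) (B ++ [b]) = max (lcsLength (A ++ [a]) B) (lcsLength A (B ++ [b])) := by
  refine le_antisymm ?_ (max_le (lcsLength_mono (Sublist.refl _) (sublist_append_left B [b]))
    (lcsLength_mono (sublist_append_left A [a]) (Sublist.refl _)))
  obtain ⟨Z, hZ, hZA, hZB⟩ := exists_sublist_length_eq_lcsLength (A ++ [a]) (B ++ [b])
  rw [← hZ]
  rcases List.sublist_concat_iff.mp hZA with hZA' | ⟨Z', hZa, -⟩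
  · exact le_max_of_le_right (hZA'.length_le_lcsLength hZB)
  rcases List.sublist_concat_iff.mp hZB with hZB' | ⟨Z'', hZb, -⟩
  · exact le_max_of_le_left (hZA.length_le_lcsLength hZB')
  · exact absurd (List.append_singleton_inj.mp (hZa.symm.trans hZb)).2 hab

end LCS

/-- Recurrences for the horizontal and vertical LCS difference tables
    (Proposition for the UW-RAM LCS algorithm). -/
theorem lcs_difference_recurrence {α : Type*} [DecidableEq α] (X Y : List α)
    (c : ℕ → ℕ → ℕ)
    (hc : ∀ i j, IsGreatest
      {l : ℕ | ∃ Z : List α, Z.length = l ∧ Z.Sublist (X.take i) ∧ Z.Sublist (Y.take j)}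
      (c i j))
    (H V : ℕ → ℕ → ℤ)
    (hH : ∀ i j, 1 ≤ j → H i j = (c i j : ℤ) - (c i (j - 1) : ℤ))
    (hV : ∀ i j, 1 ≤ i → V i j = (c i j : ℤ) - (c (i - 1) j : ℤ)) :
    ∀ i j (hi : 1 ≤ i) (hj : 1 ≤ j) (him : i ≤ X.length) (hjn : j ≤ Y.length),
      V i j = max (max ((if X[i - 1]'(by omega) = Y[j - 1]'(by omega) then (1 : ℤ) else 0)
                          - H (i - 1) j) 0)
                  (V i (j - 1) - H (i - 1) j) ∧
      H i j = max (max ((if X[i - 1]'(by omega) = Y[j - 1]'(by omega) then (1 : ℤ) else 0)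
                          - V i (j - 1)) 0)
                  (H (i - 1) j - V i (j - 1)) := by
  intro i j hi hj him hjn
  have hc_eq : ∀ i j, c i j = lcsLength (X.take i) (Y.take j) := fun i j =>
    (hc i j).unique (isGreatest_lcsLength _ _)
  rw [hV i j hi, hV i (j - 1) hi, hH (i - 1) j hj, hH i j hj, hc_eq i j, hc_eq (i - 1) j,
    hc_eq i (j - 1), hc_eq (i - 1) (j - 1), List.take_eq_take_pred_append_getElem hi him,
    List.take_eq_take_pred_append_getElem hj hjn]
  set A := X.take (i - 1)
  set B := Y.take (j - 1)
  have hq := lcsLength_concat_left_le A B X[i - 1]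
  have hr := lcsLength_concat_right_le A B Y[j - 1]
  have hpq := lcsLength_mono (List.sublist_append_left A [X[i - 1]]) (List.Sublist.refl B)
  have hpr := lcsLength_mono (List.Sublist.refl A) (List.sublist_append_left B [Y[j - 1]])
  by_cases hab : X[i - 1] = Y[j - 1]
  · have hs : lcsLength (A ++ [X[i - 1]]) (B ++ [Y[j - 1]]) = lcsLength A B + 1 :=
      hab ▸ lcsLength_concat_concat_self A B _
    rw [if_pos hab, hs]
    omega
  · rw [if_neg hab, lcsLength_concat_concat_of_ne A B hab]
    omega
end

section
/- Let A be an array of w·k nonnegative integers, partitioned into k consecutive subarrays A_0,...,A_{k-1} of length w each. Suppose A'_i is computed by the recurrence A'_i[0] = A_i[0] and A'_i[t] = A'_i[t-1] + A_i[t] for 1 ≤ t < w, and then each subarray is updated by A'_i[t] ← A'_i[t] + A'_{i-1}[w-1] sequentially for i = 1,...,k-1. Then the final array A' satisfies A'[j] = ∑_{r=0}^{j} A[r] for all 0 ≤ j < wk, i.e., A' is the prefix-sum array of A. -/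
open Finset

theorem eq_sum_range_of_add_recurrence {M : Type*} [AddCommMonoid M] {n : ℕ} {b f : ℕ → M}
    (h0 : b 0 = f 0) (hs : ∀ t, 1 ≤ t → t < n → b t = b (t - 1) + f t) :
    ∀ t, t < n → b t = ∑ r ∈ range (t + 1), f r
  | 0, _ => by simpa using h0
  | t + 1, ht => by
    rw [hs (t + 1) (by omega) ht, Nat.add_sub_cancel, sum_range_succ _ (t + 1),
      eq_sum_range_of_add_recurrence h0 hs t (by omega)]

theorem eq_sum_range_of_blockwise_carry {M : Type*} [AddCommMonoid M] {w k : ℕ} {f : ℕ → M}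
    {B C : ℕ → ℕ → M} (hB : ∀ i t, i < k → t < w → B i t = ∑ r ∈ range (t + 1), f (i * w + r))
    (hC0 : ∀ t, t < w → C 0 t = B 0 t)
    (hC : ∀ i t, 1 ≤ i → i < k → t < w → C i t = B i t + C (i - 1) (w - 1)) :
    ∀ i t, i < k → t < w → C i t = ∑ r ∈ range (i * w + t + 1), f r := by
  intro i
  induction i with
  | zero =>
    intro t hk ht
    simp [hC0 t ht, hB 0 t hk ht]
  | succ i ih =>
    intro t hi ht
    have hblock : i * w + (w - 1) + 1 = (i + 1) * w := by
      rw [add_assoc, Nat.sub_add_cancel (by omega), add_one_mul]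
    rw [hC (i + 1) t (by omega) hi ht, hB (i + 1) t hi ht, Nat.add_sub_cancel,
      ih (w - 1) (by omega) (by omega), hblock, add_assoc, sum_range_add f _ (t + 1), add_comm]

theorem blocked_prefix_sums_general (w k : ℕ) (A : ℕ → ℕ) (B C : ℕ → ℕ → ℕ)
    (hB0 : ∀ i, i < k → B i 0 = A (i * w))
    (hB : ∀ i t, i < k → 1 ≤ t → t < w → B i t = B i (t - 1) + A (i * w + t))
    (hC0 : ∀ t, t < w → C 0 t = B 0 t)
    (hC : ∀ i t, 1 ≤ i → i < k → t < w → C i t = B i t + C (i - 1) (w - 1)) :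
    ∀ i t, i < k → t < w → C i t = ∑ r ∈ Finset.range (i * w + t + 1), A r :=
  eq_sum_range_of_blockwise_carry
    (fun i t hi ht => eq_sum_range_of_add_recurrence (hB0 i hi) (hB i · hi) t ht) hC0 hC

/-- Correctness of the two-phase blocked prefix-sums computation. -/
theorem blocked_prefix_sums (w k : ℕ) (hw : 1 ≤ w) (A : ℕ → ℕ) (B C : ℕ → ℕ → ℕ)
    (hB0 : ∀ i, i < k → B i 0 = A (i * w))
    (hB : ∀ i t, i < k → 1 ≤ t → t < w → B i t = B i (t - 1) + A (i * w + t))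
    (hC0 : ∀ t, t < w → C 0 t = B 0 t)
    (hC : ∀ i t, 1 ≤ i → i < k → t < w → C i t = B i t + C (i - 1) (w - 1)) :
    ∀ i t, i < k → t < w → C i t = ∑ r ∈ Finset.range (i * w + t + 1), A r :=
  blocked_prefix_sums_general w k A B C hB0 hB hC0 hC
end

section
/- Fix w ≥ 1 and an f with 1 ≤ f, and view a word as a vector of fields each holding an (f-1)-bit nonnegative number with a designated most significant test bit per field. Let F and G be words whose fields satisfy 0 ≤ F_i, G_i < 2^{f-1}, and let F' be F with the test bit of every field set (i.e., F'_i = F_i + 2^{f-1}). Then in the difference H = F' - G computed as ∑_i (F_i + 2^{f-1} - G_i)·2^{fi}, the test bit of the i-th field of H is 1 if and only if F_i ≥ G_i. -/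
/-! Every field `F i + 2 ^ (f - 1) - G i` is below `2 ^ f`, so the packed sum has no carries
between fields and its test bit in field `i` is bit `f - 1` of that field alone. That bit is set
exactly when the subtraction of `G i` does not borrow from the added `2 ^ (f - 1)`, i.e. when
`G i ≤ F i`. -/

open Finset

namespace Nat

def packWord (f : ℕ) (X : ℕ → ℕ) (k : ℕ) : ℕ :=
  ∑ j ∈ range k, X j * 2 ^ (f * j)

theorem packWord_succ (f : ℕ) (X : ℕ → ℕ) (k : ℕ) :
    packWord f X (k + 1) = 2 ^ f * packWord f (fun j => X (j + 1)) k + X 0 := by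
  simp only [packWord, sum_range_succ', mul_sum, Nat.mul_succ, pow_add, mul_zero, pow_zero,
    mul_one]
  congr 1
  exact sum_congr rfl fun j _ => by ring

theorem testBit_packWord {f b : ℕ} (hb : b < f) :
    ∀ (k : ℕ) (X : ℕ → ℕ), (∀ j < k, X j < 2 ^ f) →
      ∀ i < k, (packWord f X k).testBit (f * i + b) = (X i).testBit b := by
  intro k
  induction k with
  | zero => intro X _ i hi; omega
  | succ k ih =>
    intro X hX i hi
    rw [packWord_succ, testBit_two_pow_mul_add _ (hX 0 (by omega))]
    rcases i with _ | i
    · simp [hb]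
    · have hpos : ¬ f * (i + 1) + b < f := by nlinarith
      rw [if_neg hpos, show f * (i + 1) + b - f = f * i + b by rw [Nat.mul_succ]; omega]
      exact ih _ (fun j hj => hX (j + 1) (by omega)) i (by omega)

theorem testBit_add_two_pow_sub_iff {F G e : ℕ} (hF : F < 2 ^ e) :
    (F + 2 ^ e - G).testBit e = true ↔ G ≤ F := by
  by_cases h : G ≤ F
  · rw [show F + 2 ^ e - G = 2 ^ e + (F - G) by omega, testBit_two_pow_add_eq,
      testBit_eq_false_of_lt (by omega)]
    simpa using h
  · rw [testBit_eq_false_of_lt (by omega)]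
    simpa using h

end Nat

theorem packed_fieldwise_comparison_general (f k : ℕ) (hf : 1 ≤ f) (F G : ℕ → ℕ)
    (hF : ∀ i, i < k → F i < 2 ^ (f - 1))
    (H : ℕ)
    (hH : H = ∑ i ∈ Finset.range k, (F i + 2 ^ (f - 1) - G i) * 2 ^ (f * i)) :
    ∀ i, i < k → (Nat.testBit H (f * i + (f - 1)) = true ↔ G i ≤ F i) := by
  intro i hi
  have hfield : ∀ j < k, F j + 2 ^ (f - 1) - G j < 2 ^ f := fun j hj => by
    have hdouble : 2 ^ f = 2 * 2 ^ (f - 1) := by rw [← pow_succ']; congr 1; omega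
    have := hF j hj
    omega
  rw [hH, ← Nat.packWord, Nat.testBit_packWord (by omega) k _ hfield i hi]
  exact Nat.testBit_add_two_pow_sub_iff (hF i hi)

/-- Packed fieldwise comparison via subtraction: the test bit of each field of
    `H = F' - G` records whether `F i ≥ G i`. -/
theorem packed_fieldwise_comparison (f k : ℕ) (hf : 1 ≤ f) (F G : ℕ → ℕ)
    (hF : ∀ i, i < k → F i < 2 ^ (f - 1))
    (hG : ∀ i, i < k → G i < 2 ^ (f - 1))
    (H : ℕ)
    (hH : H = ∑ i ∈ Finset.range k, (F i + 2 ^ (f - 1) - G i) * 2 ^ (f * i)) :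
    ∀ i, i < k → (Nat.testBit H (f * i + (f - 1)) = true ↔ G i ≤ F i) :=
  packed_fieldwise_comparison_general f k hf F G hF H hH
end

section
/- Under the packed-field comparison setup, let H be the word whose i-th field is h_i·2^{f-1} with h_i ∈ {0,1} (only test bits possibly set). Then the word M = H - (H >> (f-1)) (i.e., M = ∑_i h_i·2^{f-1}·2^{fi} - ∑_i h_i·2^{fi}) has i-th field equal to 2^{f-1} - 1 (all f-1 low bits set, test bit 0) when h_i = 1 and equal to 0 when h_i = 0. -/
/-!
Subtracting `h i` from `h i * 2^(f-1)` fieldwise leaves `h i * (2^(f-1) - 1) < 2^f`, so `M` is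
the base-`2^f` number with these digits and reading field `i` is reading digit `i`.
-/

open Finset

theorem Nat.sum_range_mul_pow_div_pow_mod {b : ℕ} {c : ℕ → ℕ} (hc : ∀ j, c j < b) {k i : ℕ}
    (hi : i < k) : (∑ j ∈ range k, c j * b ^ j) / b ^ i % b = c i := by
  induction k generalizing c i with
  | zero => omega
  | succ k ih =>
    have hsplit : ∑ j ∈ range (k + 1), c j * b ^ j
        = c 0 + b * ∑ j ∈ range k, c (j + 1) * b ^ j := by
      rw [sum_range_succ', mul_sum, add_comm]
      simp only [pow_succ', pow_zero, mul_one, mul_left_comm]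
    rw [hsplit]
    cases i with
    | zero => rw [pow_zero, Nat.div_one, Nat.add_mul_mod_self_left, Nat.mod_eq_of_lt (hc 0)]
    | succ i =>
      have hb : 0 < b := (Nat.zero_le _).trans_lt (hc 0)
      rw [pow_succ', ← Nat.div_div_eq_div_mul, Nat.add_mul_div_left _ _ hb,
        Nat.div_eq_of_lt (hc 0), zero_add]
      exact ih (fun j => hc (j + 1)) (by omega)

theorem Nat.sum_mul_mul_sub_sum_mul {ι : Type*} (s : Finset ι) (h w : ι → ℕ) {a : ℕ}
    (ha : 0 < a) :
    ∑ j ∈ s, h j * a * w j - ∑ j ∈ s, h j * w j = ∑ j ∈ s, h j * (a - 1) * w j := by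
  rw [← sum_tsub_distrib _ fun j _ => Nat.mul_le_mul_right _ (Nat.le_mul_of_pos_right _ ha)]
  refine sum_congr rfl fun j _ => ?_
  rw [← Nat.sub_mul, Nat.mul_sub_one]

theorem fieldwise_mask_general (f k : ℕ) (h : ℕ → ℕ) (hh : ∀ i, h i ≤ 1)
    (H M : ℕ)
    (hH : H = ∑ i ∈ Finset.range k, h i * 2 ^ (f - 1) * 2 ^ (f * i))
    (hM : M = H - ∑ i ∈ Finset.range k, h i * 2 ^ (f * i)) :
    ∀ i, i < k → M / 2 ^ (f * i) % 2 ^ f = h i * (2 ^ (f - 1) - 1) := by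
  have hMsum : M = ∑ j ∈ range k, h j * (2 ^ (f - 1) - 1) * (2 ^ f) ^ j := by
    simp only [hM, hH, ← pow_mul]
    exact Nat.sum_mul_mul_sub_sum_mul _ _ _ (Nat.two_pow_pos _)
  have hdigit : ∀ j, h j * (2 ^ (f - 1) - 1) < 2 ^ f := by
    intro j
    have hpos : 0 < 2 ^ (f - 1) := Nat.two_pow_pos _
    have hle : 2 ^ (f - 1) ≤ 2 ^ f := Nat.pow_le_pow_right two_pos (Nat.sub_le f 1)
    calc h j * (2 ^ (f - 1) - 1) ≤ 1 * (2 ^ (f - 1) - 1) := Nat.mul_le_mul_right _ (hh j)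
      _ < 2 ^ f := by omega
  intro i hi
  rw [hMsum, pow_mul]
  exact Nat.sum_range_mul_pow_div_pow_mod hdigit hi

/-- Fieldwise mask construction from test bits: `M = H - (H >> (f-1))` has field `i`
    equal to `2^(f-1) - 1` when `h i = 1` and to `0` when `h i = 0`. -/
theorem fieldwise_mask (f k : ℕ) (hf : 1 ≤ f) (h : ℕ → ℕ) (hh : ∀ i, h i ≤ 1)
    (H M : ℕ)
    (hH : H = ∑ i ∈ Finset.range k, h i * 2 ^ (f - 1) * 2 ^ (f * i))
    (hM : M = H - ∑ i ∈ Finset.range k, h i * 2 ^ (f * i)) :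
    ∀ i, i < k → M / 2 ^ (f * i) % 2 ^ f = h i * (2 ^ (f - 1) - 1) :=
  fieldwise_mask_general f k h hh H M hH hM
end

section
/- Define the Shift-And invariant: for a pattern P of length m and text T, and bit vectors v_i ∈ {0,1}^m updated by v_{i+1}[j] = (v_i[j-1] ∨ [j = 1]) ∧ [P[j] = T[i+1]] for 1 ≤ j ≤ m (with v_i[0] interpreted as the constant-true initial state and v_0 the all-zero vector). Then for all i ≥ 0 and 1 ≤ j ≤ min(i, m): v_i[j] = 1 if and only if P[1..j] = T[i-j+1..i]. -/
/-!
Extend the invariant to `j = 0`, where `v i 0` is always active and the empty prefix always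
matches. Then `P[1..j+1]` ends at `i + 1` exactly when `P[1..j]` ends at `i` and
`P[j+1] = T[i+1]`, which is the recurrence for `v (i + 1) (j + 1)`; induction on `i` concludes.
-/

section

variable {α : Type*}

/-- `P[1..j] = T[i-j+1..i]`. -/
def PrefixEndsAt (P T : ℕ → α) (i j : ℕ) : Prop :=
  ∀ k, 1 ≤ k → k ≤ j → P k = T (i - j + k)

lemma prefixEndsAt_zero (P T : ℕ → α) (i : ℕ) : PrefixEndsAt P T i 0 := by
  intro k hk1 hk0
  omega

lemma prefixEndsAt_succ_succ {P T : ℕ → α} {i j : ℕ} (hji : j ≤ i) :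
    PrefixEndsAt P T (i + 1) (j + 1) ↔ PrefixEndsAt P T i j ∧ P (j + 1) = T (i + 1) := by
  have hstart : i + 1 - (j + 1) = i - j := by omega
  have hend : i - j + (j + 1) = i + 1 := by omega
  unfold PrefixEndsAt
  rw [hstart]
  constructor
  · intro h
    exact ⟨fun k hk1 hkj => h k hk1 (by omega), hend ▸ h (j + 1) (by omega) le_rfl⟩
  · rintro ⟨h, hlast⟩ k hk1 hkj
    rcases Nat.lt_or_eq_of_le hkj with hk | rfl
    · exact h k hk1 (by omega)
    · rwa [hend]

section ShiftAnd

variable [DecidableEq α] {P T : ℕ → α} {m : ℕ} {v : ℕ → ℕ → Bool}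

lemma shiftAnd_succ_succ (h0 : ∀ i, v i 0 = true)
    (hrec : ∀ i j, 1 ≤ j → j ≤ m →
      v (i + 1) j = ((v i (j - 1) || decide (j = 1)) && decide (P j = T (i + 1))))
    {i j : ℕ} (hjm : j + 1 ≤ m) :
    v (i + 1) (j + 1) = (v i j && decide (P (j + 1) = T (i + 1))) := by
  rw [hrec i (j + 1) (by omega) hjm, Nat.add_sub_cancel]
  rcases j with _ | j
  · simp [h0]
  · simp

lemma shiftAnd_eq_true_iff (h0 : ∀ i, v i 0 = true)
    (hrec : ∀ i j, 1 ≤ j → j ≤ m →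
      v (i + 1) j = ((v i (j - 1) || decide (j = 1)) && decide (P j = T (i + 1))))
    (i : ℕ) : ∀ j, j ≤ i → j ≤ m → (v i j = true ↔ PrefixEndsAt P T i j) := by
  induction i with
  | zero =>
    intro j hj _
    obtain rfl : j = 0 := by omega
    simp only [h0, prefixEndsAt_zero]
  | succ i ih =>
    rintro (_ | j) hji hjm
    · simp only [h0, prefixEndsAt_zero]
    · rw [shiftAnd_succ_succ h0 hrec hjm, prefixEndsAt_succ_succ (by omega),
        Bool.and_eq_true, decide_eq_true_iff, ih j (by omega) (by omega)]

end ShiftAnd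

end

theorem shift_and_invariant_general {α : Type*} [DecidableEq α] (P T : ℕ → α) (m : ℕ)
    (v : ℕ → ℕ → Bool)
    (h0 : ∀ i, v i 0 = true)
    (hrec : ∀ i j, 1 ≤ j → j ≤ m →
      v (i + 1) j = ((v i (j - 1) || decide (j = 1)) && decide (P j = T (i + 1)))) :
    ∀ i j, 1 ≤ j → j ≤ i → j ≤ m →
      (v i j = true ↔ ∀ k, 1 ≤ k → k ≤ j → P k = T (i - j + k)) :=
  fun i j _ hji hjm => shiftAnd_eq_true_iff h0 hrec i j hji hjm

/-- The Shift-And invariant: state `j` of the automaton is active after reading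
    `T[1..i]` iff `P[1..j] = T[i-j+1..i]`. Strings are 1-indexed. -/
theorem shift_and_invariant {α : Type*} [DecidableEq α] (P T : ℕ → α) (m : ℕ)
    (v : ℕ → ℕ → Bool)
    (h0 : ∀ i, v i 0 = true)
    (hinit : ∀ j, 1 ≤ j → j ≤ m → v 0 j = false)
    (hrec : ∀ i j, 1 ≤ j → j ≤ m →
      v (i + 1) j = ((v i (j - 1) || decide (j = 1)) && decide (P j = T (i + 1)))) :
    ∀ i j, 1 ≤ j → j ≤ i → j ≤ m →
      (v i j = true ↔ ∀ k, 1 ≤ k → k ≤ j → P k = T (i - j + k)) :=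
  shift_and_invariant_general P T m v h0 hrec
end

section
/- As a consequence of the Shift-And invariant, for a pattern P of length m ≤ i ≤ |T|, the bit v_i[m] equals 1 if and only if P occurs in T ending at position i, i.e., T[i-m+1..i] = P. -/
/-- Consequence of the Shift-And invariant: bit `m` signals an occurrence of the
    pattern `P` ending at text position `i`. -/
theorem shift_and_match {α : Type*} [DecidableEq α] (P T : ℕ → α) (m : ℕ)
    (hm : 1 ≤ m)
    (v : ℕ → ℕ → Bool)
    (h0 : ∀ i, v i 0 = true)
    (hinit : ∀ j, 1 ≤ j → j ≤ m → v 0 j = false)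
    (hrec : ∀ i j, 1 ≤ j → j ≤ m →
      v (i + 1) j = ((v i (j - 1) || decide (j = 1)) && decide (P j = T (i + 1)))) :
    ∀ i, m ≤ i →
      (v i m = true ↔ ∀ k, 1 ≤ k → k ≤ m → P k = T (i - m + k)) := by
  have key : ∀ i j, 1 ≤ j → j ≤ m →
      (v i j = true ↔ (j ≤ i ∧ ∀ k, 1 ≤ k → k ≤ j → P k = T (i - j + k))) := by
    intro i
    induction i with
    | zero =>
      intro j hj hjm
      rw [hinit j hj hjm]
      simp
      omega
    | succ i ih =>
      intro j hj hjm
      rw [hrec i j hj hjm]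
      simp only [Bool.and_eq_true, Bool.or_eq_true, decide_eq_true_eq]
      rcases eq_or_lt_of_le hj with h1 | h2
      · subst h1
        simp only [h0]
        constructor
        · rintro ⟨-, hp⟩
          refine ⟨by omega, fun k hk1 hk2 => ?_⟩
          have hk : k = 1 := by omega
          subst hk
          have : i + 1 - 1 + 1 = i + 1 := by omega
          rw [this]; exact hp
        · rintro ⟨-, hp⟩
          refine ⟨Or.inl trivial, ?_⟩
          have := hp 1 le_rfl le_rfl
          have h2 : i + 1 - 1 + 1 = i + 1 := by omega
          rwa [h2] at this
      · have ih' := ih (j - 1) (by omega) (by omega)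
        have hidx : i - (j - 1) = i + 1 - j := by omega
        constructor
        · rintro ⟨hv | hje, hp⟩
          · rw [ih'] at hv
            obtain ⟨hle, hall⟩ := hv
            refine ⟨by omega, fun k hk1 hk2 => ?_⟩
            rcases eq_or_lt_of_le hk2 with hkj | hkj
            · subst hkj
              have : i + 1 - k + k = i + 1 := by omega
              rw [this]; exact hp
            · have := hall k hk1 (by omega)
              rwa [hidx] at this
          · omega
        · rintro ⟨hle, hall⟩
          refine ⟨Or.inl ?_, ?_⟩
          · rw [ih']
            refine ⟨by omega, fun k hk1 hk2 => ?_⟩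
            rw [hidx]
            exact hall k hk1 (by omega)
          · have := hall j hj le_rfl
            have h3 : i + 1 - j + j = i + 1 := by omega
            rwa [h3] at this
  intro i hi
  rw [key i m hm le_rfl]
  constructor
  · exact fun h => h.2
  · exact fun h => ⟨hi, h⟩
end

section
/- Correctness of the Boyer–Moore–Horspool shift: let P have length m and define jump[σ] = m - max{ j : 1 ≤ j ≤ m-1 and P[j] = σ } if σ occurs in P[1..m-1], and jump[σ] = m otherwise. If the window T[i+1..i+m] is aligned at position i and c = T[i+m], then no occurrence of P in T starts at any position p with i+1 < p < i + 1 + jump[c]. Hence shifting the window by jump[c] skips no occurrences other than possibly the one at position i+1 itself. -/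
/-- Correctness (safety) of the Boyer–Moore–Horspool shift: no occurrence of `P`
    starts strictly between the current window start `i+1` and the shifted
    position `i + 1 + jump (T (i+m))`. -/
theorem bmh_shift_safe {α : Type*} (T P : ℕ → α) (m : ℕ) (hm : 1 ≤ m)
    (jump : α → ℕ)
    (hjump : ∀ σ : α,
      (jump σ = m ∧ ∀ j, 1 ≤ j → j ≤ m - 1 → P j ≠ σ) ∨
      (∃ j, 1 ≤ j ∧ j ≤ m - 1 ∧ P j = σ ∧ jump σ = m - j ∧
        ∀ j', j < j' → j' ≤ m - 1 → P j' ≠ σ)) :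
    ∀ i p, i + 1 < p → p < i + 1 + jump (T (i + m)) →
      ¬ (∀ k, 1 ≤ k → k ≤ m → T (p + k - 1) = P k) := by
  intro i p h1 h2 hocc
  set c := T (i + m) with hc
  have hjle : jump c ≤ m := by
    rcases hjump c with ⟨h, _⟩ | ⟨j, hj1, hj2, _, hje, _⟩ <;> omega
  set k := i + m + 1 - p with hk
  have hk1 : 1 ≤ k := by omega
  have hkm : k ≤ m - 1 := by omega
  have hPk : P k = c := by
    rw [← hocc k hk1 (by omega), hc]
    congr 1
    omega
  rcases hjump c with ⟨_, hno⟩ | ⟨j, hj1, hj2, _, hje, hmax⟩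
  · exact hno k hk1 hkm hPk
  · exact hmax k (by omega) hkm hPk
end
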